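/- arXiv:math/0002092 — 2 statements merged into one kernel-verified Lean document; each statement's English description precedes it below -/
import Mathlib

section
/- For (z₀,z₁,z₂,z₃,z₄) ∈ ℝ⁵, all five partial derivatives of f = z₁z₄² + z₀z₂z₄ - z₀²z₃ vanish simultaneously if and only if z₀ = 0 and z₄ = 0. Consequently the singular locus of the projective cubic F is the 2-plane at infinity {z₀ = z₄ = 0}. -/
/-! The partials along `z₁` and `z₃` are `z₄²` and `-z₀²`, so their vanishing forces
`z₀ = z₄ = 0`; conversely every partial of `f` has each of its monomials divisible by `z₀` or `z₄`. -/

def cubic (z : Fin 5 → ℝ) : ℝ :=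
  z 1 * (z 4) ^ 2 + z 0 * z 2 * z 4 - (z 0) ^ 2 * z 3

def cubicGradient (z : Fin 5 → ℝ) : Fin 5 → ℝ :=
  ![z 2 * z 4 - 2 * z 0 * z 3, z 4 ^ 2, z 0 * z 4, -z 0 ^ 2, 2 * z 1 * z 4 + z 0 * z 2]

theorem deriv_cubic_update (z : Fin 5 → ℝ) (i : Fin 5) :
    deriv (fun t => cubic (Function.update z i t)) (z i) = cubicGradient z i := by
  fin_cases i <;>
    simp (disch := fun_prop) [cubic, cubicGradient, Function.update, deriv_fun_add,
      deriv_fun_sub, deriv_fun_mul]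
  all_goals ring

theorem cubicGradient_eq_zero_iff (z : Fin 5 → ℝ) :
    cubicGradient z = 0 ↔ z 0 = 0 ∧ z 4 = 0 := by
  constructor
  · intro h
    have h₁ : z 4 ^ 2 = 0 := congrFun h 1
    have h₃ : -z 0 ^ 2 = 0 := congrFun h 3
    exact ⟨by simpa using h₃, by simpa using h₁⟩
  · rintro ⟨h₀, h₄⟩
    ext i
    fin_cases i <;> simp [cubicGradient, h₀, h₄]

/-- All five partial derivatives of f = z₁z₄² + z₀z₂z₄ - z₀²z₃ vanish
simultaneously iff z₀ = 0 and z₄ = 0; the singular locus of F is the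
2-plane at infinity {z₀ = z₄ = 0}. -/
theorem stmt_5
    (f : (Fin 5 → ℝ) → ℝ)
    (hf : f = fun z => z 1 * (z 4) ^ 2 + z 0 * z 2 * z 4 - (z 0) ^ 2 * z 3)
    (z : Fin 5 → ℝ) :
    (∀ i : Fin 5, deriv (fun t => f (Function.update z i t)) (z i) = 0) ↔
      z 0 = 0 ∧ z 4 = 0 := by
  obtain rfl : f = cubic := hf
  simp only [deriv_cubic_update]
  exact funext_iff.symm.trans (cubicGradient_eq_zero_iff z)
end

section
/- The tangent space to the cubic F = {z₁z₄² + z₀z₂z₄ - z₀²z₃ = 0} at any smooth point Z = B₁ + λB₂ of the line B₁ ∧ B₂ (with z₀-coordinate nonzero, i.e., λq ≠ 0) contains the vectors B₀ = A₀ + pA₄ and B₃ + qB₄ = A₃ + qA₄, and hence equals span{B₁, B₂, B₀, B₃ + qB₄}; in particular it does not depend on λ. Equivalently, the gradient of f at Z = (λq, 1, λ-2p, λp-p², λpq) annihilates B₀, B₁, B₂, and B₃ + qB₄. -/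
/-- At any smooth point Z = B₁ + λB₂ (with λq ≠ 0) the gradient of f
annihilates B₀, B₁, B₂ and B₃ + qB₄, and the tangent hyperplane
{v : ∇f(Z)·v = 0} equals span{B₀, B₁, B₂, B₃ + qB₄}; in particular it
does not depend on λ. -/
theorem stmt_15 (p q lam : ℝ) (hlq : lam * q ≠ 0)
    (grad : (Fin 5 → ℝ) → (Fin 5 → ℝ))
    (hgrad : ∀ z, grad z = ![z 2 * z 4 - 2 * z 0 * z 3, (z 4) ^ 2,
      z 0 * z 4, -(z 0) ^ 2, 2 * z 1 * z 4 + z 0 * z 2])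
    (Z B₀ B₁ B₂ B₃ B₄ : Fin 5 → ℝ)
    (hZ : Z = ![lam * q, 1, lam - 2 * p, lam * p - p ^ 2, lam * p * q])
    (hB₀ : B₀ = ![1, 0, 0, 0, p])
    (hB₁ : B₁ = ![0, 1, -2 * p, -p ^ 2, 0])
    (hB₂ : B₂ = ![q, 0, 1, p, p * q])
    (hB₃ : B₃ = ![0, 0, 0, 1, 0])
    (hB₄ : B₄ = ![0, 0, 0, 0, 1]) :
    (∑ i, grad Z i * B₀ i = 0) ∧
    (∑ i, grad Z i * B₁ i = 0) ∧
    (∑ i, grad Z i * B₂ i = 0) ∧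
    (∑ i, grad Z i * (B₃ + q • B₄) i = 0) ∧
    {v : Fin 5 → ℝ | ∑ i, grad Z i * v i = 0}
      = ↑(Submodule.span ℝ {B₀, B₁, B₂, B₃ + q • B₄}) := by
  have hl : lam ≠ 0 := fun h => hlq (by simp [h])
  have hq : q ≠ 0 := fun h => hlq (by simp [h])
  subst hZ hB₀ hB₁ hB₂ hB₃ hB₄
  rw [hgrad]
  refine ⟨by simp [Fin.sum_univ_five]; ring,
    by simp [Fin.sum_univ_five]; ring,
    by simp [Fin.sum_univ_five]; ring,
    by simp [Fin.sum_univ_five, Pi.add_apply, Pi.smul_apply]; ring, ?_⟩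
  ext v
  simp only [Set.mem_setOf_eq, SetLike.mem_coe, Fin.sum_univ_five]
  constructor
  · intro hv
    simp only [Matrix.cons_val_zero, Matrix.cons_val_one, Matrix.head_cons,
      Matrix.cons_val_two, Matrix.tail_cons, Matrix.cons_val_three,
      Matrix.cons_val_four] at hv
    have key : v 4 = p * v 0 - p ^ 2 * q * v 1 - p * q * v 2 + q * v 3 := by
      have h2 : lam ^ 2 * q *
          (v 4 - (p * v 0 - p ^ 2 * q * v 1 - p * q * v 2 + q * v 3)) = 0 := by
        linear_combination hv
      have := mul_ne_zero (pow_ne_zero 2 hl) hq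
      have := (mul_eq_zero.mp h2).resolve_left this
      linarith
    have hdecomp : v = (v 0 - q * v 2 - 2 * p * q * v 1) • ![(1:ℝ), 0, 0, 0, p]
        + (v 1) • ![(0:ℝ), 1, -2 * p, -p ^ 2, 0]
        + (v 2 + 2 * p * v 1) • ![(q:ℝ), 0, 1, p, p * q]
        + (v 3 - p * v 2 - p ^ 2 * v 1) • (![(0:ℝ), 0, 0, 1, 0] + q • ![(0:ℝ), 0, 0, 0, 1]) := by
      funext i
      fin_cases i <;>
        simp [Pi.add_apply, Pi.smul_apply, key] <;> ring
    rw [hdecomp]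
    refine Submodule.add_mem _ (Submodule.add_mem _ (Submodule.add_mem _
      (Submodule.smul_mem _ _ ?_) (Submodule.smul_mem _ _ ?_))
      (Submodule.smul_mem _ _ ?_)) (Submodule.smul_mem _ _ ?_) <;>
      apply Submodule.subset_span <;> simp
  · intro hv
    induction hv using Submodule.span_induction with
    | mem x hx =>
      rcases hx with h | h | h | h <;> subst h <;>
        simp [Pi.add_apply, Pi.smul_apply] <;> ring
    | zero => simp
    | add x y _ _ hx hy =>
      simp only [Pi.add_apply]
      linarith [hx, hy]
    | smul a x _ hx =>
      simp only [Pi.smul_apply, smul_eq_mul]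
      linear_combination a * hx
end
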